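/- If two free quandles FQ(S) and FQ(T) are isomorphic as quandles, then |S| = |T|. -/

import Mathlib

/-! The free group `F(S)` acts on `FQ(S)` by left multiplication on the word `w` of a
representative `(a, w)`, and `x ◃ y = toConj x • y`. Hence a quandle morphism
`f : FQ(S) → FQ(T)` is equivariant along the group morphism `F(S) → F(T)`, `a ↦ toConj (f a)`,
which makes `toConj` natural and the construction functorial. A quandle isomorphism thus
induces `F(S) ≃* F(T)`, and a free group determines the cardinality of its basis. -/

open Quandles

/-- The free rack on a set `S`: pairs `(a, w)` (thought of as the conjugate
`w a w⁻¹` of the generator `a`), following Fenn–Rourke. -/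
def FreeRack (S : Type u) : Type u := S × FreeGroup S

namespace FreeRack

variable {S : Type u}

/-- The element of the free group represented by the pair `(a, w)`,
namely the conjugate `w a w⁻¹` of the generator `a`. -/
def toGroup (x : FreeRack S) : FreeGroup S := x.2 * FreeGroup.of x.1 * x.2⁻¹

instance : Rack (FreeRack S) where
  act x y := (y.1, toGroup x * y.2)
  self_distrib := by
    rintro ⟨a, w⟩ ⟨b, u⟩ ⟨c, v⟩
    refine Prod.ext rfl ?_
    show toGroup (a, w) * (toGroup (b, u) * v)
        = toGroup (b, toGroup (a, w) * u) * (toGroup (a, w) * v)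
    simp only [toGroup]
    group
  invAct x y := (y.1, (toGroup x)⁻¹ * y.2)
  left_inv x y := by
    refine Prod.ext rfl ?_
    show (toGroup x)⁻¹ * (toGroup x * y.2) = y.2
    group
  right_inv x y := by
    refine Prod.ext rfl ?_
    show toGroup x * ((toGroup x)⁻¹ * y.2) = y.2
    group

/-- The defining relation of the free quandle as a quotient of the free rack:
`(a, w) ~ (a, w · a)`. -/
def rel (p q : FreeRack S) : Prop := q = (p.1, p.2 * FreeGroup.of p.1)

theorem toGroup_of_rel {p q : FreeRack S} (h : rel p q) : toGroup p = toGroup q := by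
  subst h
  rcases p with ⟨a, w⟩
  simp only [toGroup]
  group

theorem toGroup_of_eqvGen {p q : FreeRack S} (h : Relation.EqvGen rel p q) :
    toGroup p = toGroup q := by
  induction h with
  | rel a b hab => exact toGroup_of_rel hab
  | refl a => rfl
  | symm a b _ ih => exact ih.symm
  | trans a b c _ _ ih1 ih2 => exact ih1.trans ih2

theorem fst_of_eqvGen {p q : FreeRack S} (h : Relation.EqvGen rel p q) : p.1 = q.1 := by
  induction h with
  | rel a b hab => rw [hab]
  | refl a => rfl
  | symm a b _ ih => exact ih.symm
  | trans a b c _ _ ih1 ih2 => exact ih1.trans ih2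

/-- The setoid generated by the relation `(a, w) ~ (a, w · a)`. -/
instance setoid (S : Type u) : Setoid (FreeRack S) :=
  ⟨Relation.EqvGen rel, Relation.EqvGen.is_equivalence rel⟩

theorem act_eqvGen_right (p : FreeRack S) {q q' : FreeRack S}
    (h : Relation.EqvGen rel q q') : Relation.EqvGen rel (p ◃ q) (p ◃ q') := by
  induction h with
  | rel a b hab =>
      refine Relation.EqvGen.rel _ _ ?_
      rw [hab]
      refine Prod.ext rfl ?_
      show toGroup p * (a.2 * FreeGroup.of a.1) = toGroup p * a.2 * FreeGroup.of a.1
      group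
  | refl a => exact Relation.EqvGen.refl _
  | symm a b _ ih => exact Relation.EqvGen.symm _ _ ih
  | trans a b c _ _ ih1 ih2 => exact Relation.EqvGen.trans _ _ _ ih1 ih2

theorem act_eq_of_eqvGen_left {p p' : FreeRack S} (q : FreeRack S)
    (h : Relation.EqvGen rel p p') : p ◃ q = p' ◃ q := by
  show (q.1, toGroup p * q.2) = (q.1, toGroup p' * q.2)
  rw [toGroup_of_eqvGen h]

theorem invAct_eqvGen_right (p : FreeRack S) {q q' : FreeRack S}
    (h : Relation.EqvGen rel q q') : Relation.EqvGen rel (p ◃⁻¹ q) (p ◃⁻¹ q') := by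
  induction h with
  | rel a b hab =>
      refine Relation.EqvGen.rel _ _ ?_
      rw [hab]
      refine Prod.ext rfl ?_
      show (toGroup p)⁻¹ * (a.2 * FreeGroup.of a.1) = (toGroup p)⁻¹ * a.2 * FreeGroup.of a.1
      group
  | refl a => exact Relation.EqvGen.refl _
  | symm a b _ ih => exact Relation.EqvGen.symm _ _ ih
  | trans a b c _ _ ih1 ih2 => exact Relation.EqvGen.trans _ _ _ ih1 ih2

theorem invAct_eq_of_eqvGen_left {p p' : FreeRack S} (q : FreeRack S)
    (h : Relation.EqvGen rel p p') : p ◃⁻¹ q = p' ◃⁻¹ q := by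
  show (q.1, (toGroup p)⁻¹ * q.2) = (q.1, (toGroup p')⁻¹ * q.2)
  rw [toGroup_of_eqvGen h]

end FreeRack

/-- The free quandle on a set `S`: the quotient of the free rack on `S` by the
equivalence relation generated by `(a, w) ~ (a, w · a)`. -/
def FreeQuandle (S : Type u) : Type u := Quotient (FreeRack.setoid S)

namespace FreeQuandle

variable {S : Type u}

instance : Quandle (FreeQuandle S) where
  act := Quotient.map₂ Shelf.act (by
    intro p p' hp q q' hq
    calc Shelf.act p q = Shelf.act p' q := FreeRack.act_eq_of_eqvGen_left q hp
    _ ≈ Shelf.act p' q' := FreeRack.act_eqvGen_right p' hq)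
  self_distrib := by
    intro x y z
    refine Quotient.inductionOn₃ x y z (fun p q r => ?_)
    exact congrArg (Quotient.mk _) Shelf.self_distrib
  invAct := Quotient.map₂ Rack.invAct (by
    intro p p' hp q q' hq
    calc Rack.invAct p q = Rack.invAct p' q := FreeRack.invAct_eq_of_eqvGen_left q hp
    _ ≈ Rack.invAct p' q' := FreeRack.invAct_eqvGen_right p' hq)
  left_inv := by
    intro x y
    refine Quotient.inductionOn₂ x y (fun p q => ?_)
    exact congrArg (Quotient.mk _) (Rack.left_inv p q)
  right_inv := by
    intro x y
    refine Quotient.inductionOn₂ x y (fun p q => ?_)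
    exact congrArg (Quotient.mk _) (Rack.right_inv p q)
  fix := by
    intro x
    refine Quotient.inductionOn x (fun p => ?_)
    refine Quotient.sound ?_
    refine Relation.EqvGen.trans _ _ _ (Relation.EqvGen.refl _) ?_
    have h : p ◃ p = (p.1, p.2 * FreeGroup.of p.1) := by
      refine Prod.ext rfl ?_
      show FreeRack.toGroup p * p.2 = p.2 * FreeGroup.of p.1
      simp only [FreeRack.toGroup]
      group
    rw [h]
    exact Relation.EqvGen.symm _ _ (Relation.EqvGen.rel _ _ rfl)

/-- The canonical inclusion of the generating set into the free quandle. -/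
def of (a : S) : FreeQuandle S := Quotient.mk _ (a, 1)

/-- The natural map from the free quandle on `S` into the conjugation quandle
of the free group on `S`, sending the class of `(a, w)` to the conjugate
`w a w⁻¹` of the generator `a`. -/
def toConj : FreeQuandle S → Quandle.Conj (FreeGroup S) :=
  Quotient.lift FreeRack.toGroup (fun _ _ h => FreeRack.toGroup_of_eqvGen h)

end FreeQuandle

namespace FreeQuandle

variable {S : Type u} {T : Type v} {U : Type w}

instance : SMul (FreeGroup S) (FreeQuandle S) where
  smul w := Quotient.map (fun p => (p.1, w * p.2)) fun _ _ h =>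
    Quot.eqvGen_exact <| congrArg
      (Quot.map (fun p : FreeRack S => (p.1, w * p.2)) fun p _ hpq => by
        subst hpq; exact Prod.ext rfl (mul_assoc _ _ _).symm)
      (Quot.eqvGen_sound h)

instance : MulAction (FreeGroup S) (FreeQuandle S) where
  one_smul := Quotient.ind fun _ => congrArg (Quotient.mk _) (Prod.ext rfl (one_mul _))
  mul_smul _ _ := Quotient.ind fun _ => congrArg (Quotient.mk _) (Prod.ext rfl (mul_assoc _ _ _))

theorem smul_of (w : FreeGroup S) (a : S) : w • of a = ⟦(a, w)⟧ :=
  congrArg (Quotient.mk _) (Prod.ext rfl (mul_one w))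

@[elab_as_elim]
theorem induction_on {C : FreeQuandle S → Prop} (x : FreeQuandle S)
    (smul_of : ∀ (w : FreeGroup S) (a : S), C (w • of a)) : C x :=
  Quotient.ind (fun ⟨a, w⟩ => FreeQuandle.smul_of w a ▸ smul_of w a) x

theorem toConj_smul_of (w : FreeGroup S) (a : S) :
    toConj (w • of a) = w * FreeGroup.of a * w⁻¹ := by
  rw [smul_of]; rfl

theorem toConj_of (a : S) : toConj (of a) = FreeGroup.of a := by
  simpa using toConj_smul_of 1 a

theorem toConj_smul (w : FreeGroup S) (x : FreeQuandle S) :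
    toConj (w • x) = w * toConj x * w⁻¹ := by
  induction x using induction_on with
  | smul_of u a => rw [← mul_smul, toConj_smul_of, toConj_smul_of]; group

theorem act_eq_toConj_smul (x y : FreeQuandle S) : x ◃ y = toConj x • y := by
  induction x using induction_on with
  | smul_of u a =>
    induction y using induction_on with
    | smul_of w b => rw [smul_of, smul_of]; rfl

theorem of_smul (a : S) (x : FreeQuandle S) : FreeGroup.of a • x = of a ◃ x := by
  rw [act_eq_toConj_smul, toConj_of]

def freeGroupMap (f : FreeQuandle S →◃ FreeQuandle T) : FreeGroup S →* FreeGroup T :=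
  FreeGroup.lift fun a => toConj (f (of a))

theorem freeGroupMap_of (f : FreeQuandle S →◃ FreeQuandle T) (a : S) :
    freeGroupMap f (FreeGroup.of a) = toConj (f (of a)) :=
  FreeGroup.lift_apply_of

theorem apply_smul (f : FreeQuandle S →◃ FreeQuandle T) (w : FreeGroup S) (x : FreeQuandle S) :
    f (w • x) = freeGroupMap f w • f x := by
  induction w using FreeGroup.induction_on generalizing x with
  | C1 => rw [one_smul, map_one, one_smul]
  | of a => rw [of_smul, f.map_act, act_eq_toConj_smul, freeGroupMap_of]
  | inv_of a ih => rw [map_inv, eq_inv_smul_iff, ← ih, smul_inv_smul]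
  | mul u v ihu ihv => rw [mul_smul, ihu, ihv, map_mul, mul_smul]

theorem toConj_map (f : FreeQuandle S →◃ FreeQuandle T) (x : FreeQuandle S) :
    toConj (f x) = freeGroupMap f (toConj x) := by
  induction x using induction_on with
  | smul_of w a =>
    rw [apply_smul, toConj_smul, toConj_smul_of, map_mul, map_mul, map_inv, freeGroupMap_of]

theorem freeGroupMap_id : freeGroupMap (ShelfHom.id (FreeQuandle S)) = MonoidHom.id _ :=
  FreeGroup.ext_hom _ _ fun a => (freeGroupMap_of _ a).trans (toConj_of a)

theorem freeGroupMap_comp (g : FreeQuandle T →◃ FreeQuandle U)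
    (f : FreeQuandle S →◃ FreeQuandle T) :
    freeGroupMap (g.comp f) = (freeGroupMap g).comp (freeGroupMap f) :=
  FreeGroup.ext_hom _ _ fun a => by
    rw [MonoidHom.comp_apply, freeGroupMap_of, freeGroupMap_of, ShelfHom.comp_apply, toConj_map]

end FreeQuandle

/-- If two free quandles are isomorphic, then their generating sets have the
same cardinality. -/
theorem freeQuandle_rank_well_defined (S T : Type)
    (e : FreeQuandle S ≃ FreeQuandle T)
    (he : ∀ x y : FreeQuandle S, e (x ◃ y) = e x ◃ e y) :
    Nonempty (S ≃ T) := by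
  let f : FreeQuandle S →◃ FreeQuandle T := ⟨e, he _ _⟩
  let g : FreeQuandle T →◃ FreeQuandle S :=
    ⟨e.symm, fun {x y} => e.injective <| by simp only [he, Equiv.apply_symm_apply]⟩
  have hgf : g.comp f = ShelfHom.id _ := DFunLike.ext _ _ e.symm_apply_apply
  have hfg : f.comp g = ShelfHom.id _ := DFunLike.ext _ _ e.apply_symm_apply
  refine ⟨.ofFreeGroupEquiv <|
    MonoidHom.toMulEquiv (FreeQuandle.freeGroupMap f) (FreeQuandle.freeGroupMap g) ?_ ?_⟩
  · rw [← FreeQuandle.freeGroupMap_comp, hgf, FreeQuandle.freeGroupMap_id]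
  · rw [← FreeQuandle.freeGroupMap_comp, hfg, FreeQuandle.freeGroupMap_id]
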